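/- arXiv:0810.1276 — 5 statements merged into one kernel-verified Lean document; each statement's English description precedes it below -/
import Mathlib

section
/- Almost sure simplicity of zeros (abstract form of Lemma 3.2): Let ℓ > 0, let N ≥ 2 be an integer, and let b : ℝ → ℝ^N be a C^∞, ℓ-periodic map such that for every θ ∈ ℝ the vectors b(θ) and b'(θ) are linearly independent. Then the set C = { a ∈ ℝ^N : ∃ θ ∈ [0,ℓ], ⟨a, b(θ)⟩ = 0 and ⟨a, b'(θ)⟩ = 0 } has Lebesgue measure zero in ℝ^N. -/
open MeasureTheory
open scoped RealInnerProductSpace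

set_option maxHeartbeats 2000000 in
private lemma double_zeros_aux (N : ℕ) (b : ℝ → EuclideanSpace ℝ (Fin N))
    (hsmooth : ContDiff ℝ (⊤ : ℕ∞) b)
    (hind : ∀ θ : ℝ, LinearIndependent ℝ ![b θ, deriv b θ]) :
    volume {a : EuclideanSpace ℝ (Fin N) |
      ∃ θ : ℝ, ⟪a, b θ⟫ = 0 ∧ ⟪a, deriv b θ⟫ = 0} = 0 := by
  classical
  have hselfpos : ∀ x : EuclideanSpace ℝ (Fin N), x ≠ 0 → 0 < ⟪x, x⟫ := fun x hx =>
    lt_of_le_of_ne real_inner_self_nonneg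
      (fun h => hx ((inner_self_eq_zero (𝕜 := ℝ)).mp h.symm))
  have hsm : ContDiff ℝ (⊤ : ℕ∞) b := hsmooth.of_le (by simp)
  set b' : ℝ → EuclideanSpace ℝ (Fin N) := deriv b with hb'def
  have hb'sm : ContDiff ℝ (⊤ : ℕ∞) b' := (contDiff_infty_iff_deriv.mp hsm).2
  have hbd : Differentiable ℝ b := hsm.differentiable (by simp)
  have hb'd : Differentiable ℝ b' := hb'sm.differentiable (by simp)
  have hpair : ∀ θ, ∀ s t : ℝ, s • b θ + t • b' θ = 0 → s = 0 ∧ t = 0 :=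
    fun θ => LinearIndependent.pair_iff.mp (hind θ)
  -- Gram data
  set g11 : ℝ → ℝ := fun θ => ⟪b θ, b θ⟫ with hg11def
  set g12 : ℝ → ℝ := fun θ => ⟪b θ, b' θ⟫ with hg12def
  set g22 : ℝ → ℝ := fun θ => ⟪b' θ, b' θ⟫ with hg22def
  set d : ℝ → ℝ := fun θ => g11 θ * g22 θ - g12 θ * g12 θ with hddef
  have hb0 : ∀ θ, b θ ≠ 0 := by
    intro θ h
    have := (hpair θ 1 0 (by simp [h])).1
    norm_num at this
  have hg11 : ∀ θ, 0 < g11 θ := fun θ => hselfpos _ (hb0 θ)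
  have hcomm : ∀ θ, ⟪b' θ, b θ⟫ = g12 θ := fun θ => real_inner_comm _ _
  have hd : ∀ θ, 0 < d θ := by
    intro θ
    have hv : g11 θ • b' θ - g12 θ • b θ ≠ 0 := by
      intro h
      have h' : (-(g12 θ)) • b θ + g11 θ • b' θ = 0 := by
        rw [neg_smul, add_comm, ← sub_eq_add_neg]; exact h
      exact (hg11 θ).ne' (hpair θ _ _ h').2
    have hq : (0:ℝ) < ⟪g11 θ • b' θ - g12 θ • b θ, g11 θ • b' θ - g12 θ • b θ⟫ :=
      hselfpos _ hv
    have hexp : ⟪g11 θ • b' θ - g12 θ • b θ, g11 θ • b' θ - g12 θ • b θ⟫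
        = g11 θ * d θ := by
      obtain ⟨P, hP⟩ : ∃ P, ⟪b θ, b θ⟫ = P := ⟨_, rfl⟩
      obtain ⟨Q, hQ⟩ : ∃ Q, ⟪b θ, b' θ⟫ = Q := ⟨_, rfl⟩
      obtain ⟨R, hR⟩ : ∃ R, ⟪b' θ, b' θ⟫ = R := ⟨_, rfl⟩
      simp only [inner_sub_left, inner_sub_right, real_inner_smul_left, real_inner_smul_right,
        hcomm θ, hddef, hg11def, hg12def, hg22def]
      rw [hP, hQ, hR]
      ring
    rw [hexp] at hq
    nlinarith [hg11 θ]
  -- the map Ψ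
  set Ψ : ℝ × EuclideanSpace ℝ (Fin N) → ℝ × EuclideanSpace ℝ (Fin N) := fun p =>
    (⟪p.2, b p.1⟫,
      p.2 - ((g22 p.1 * ⟪p.2, b p.1⟫ - g12 p.1 * ⟪p.2, b' p.1⟫) / d p.1) • b p.1
          - ((g11 p.1 * ⟪p.2, b' p.1⟫ - g12 p.1 * ⟪p.2, b p.1⟫) / d p.1) • b' p.1)
    with hΨdef
  have hbp : Differentiable ℝ fun p : ℝ × EuclideanSpace ℝ (Fin N) => b p.1 :=
    hbd.comp differentiable_fst
  have hb'p : Differentiable ℝ fun p : ℝ × EuclideanSpace ℝ (Fin N) => b' p.1 :=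
    hb'd.comp differentiable_fst
  have hib : Differentiable ℝ fun p : ℝ × EuclideanSpace ℝ (Fin N) => ⟪p.2, b p.1⟫ :=
    differentiable_snd.inner ℝ hbp
  have hib' : Differentiable ℝ fun p : ℝ × EuclideanSpace ℝ (Fin N) => ⟪p.2, b' p.1⟫ :=
    differentiable_snd.inner ℝ hb'p
  have hg11p : Differentiable ℝ fun p : ℝ × EuclideanSpace ℝ (Fin N) => g11 p.1 :=
    (hbd.inner ℝ hbd).comp differentiable_fst
  have hg12p : Differentiable ℝ fun p : ℝ × EuclideanSpace ℝ (Fin N) => g12 p.1 :=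
    (hbd.inner ℝ hb'd).comp differentiable_fst
  have hg22p : Differentiable ℝ fun p : ℝ × EuclideanSpace ℝ (Fin N) => g22 p.1 :=
    (hb'd.inner ℝ hb'd).comp differentiable_fst
  have hdp : Differentiable ℝ fun p : ℝ × EuclideanSpace ℝ (Fin N) => d p.1 :=
    (hg11p.mul hg22p).sub (hg12p.mul hg12p)
  have hdinv : Differentiable ℝ fun p : ℝ × EuclideanSpace ℝ (Fin N) => (d p.1)⁻¹ :=
    hdp.inv (fun p => (hd p.1).ne')
  have hΨd : Differentiable ℝ Ψ := by
    rw [hΨdef]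
    apply Differentiable.prodMk hib
    apply Differentiable.sub
    apply Differentiable.sub differentiable_snd
    · have : Differentiable ℝ fun p : ℝ × EuclideanSpace ℝ (Fin N) =>
          ((g22 p.1 * ⟪p.2, b p.1⟫ - g12 p.1 * ⟪p.2, b' p.1⟫) * (d p.1)⁻¹) • b p.1 :=
        (((hg22p.mul hib).sub (hg12p.mul hib')).mul hdinv).smul hbp
      simpa [div_eq_mul_inv] using this
    · have : Differentiable ℝ fun p : ℝ × EuclideanSpace ℝ (Fin N) =>
          ((g11 p.1 * ⟪p.2, b' p.1⟫ - g12 p.1 * ⟪p.2, b p.1⟫) * (d p.1)⁻¹) • b' p.1 :=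
        (((hg11p.mul hib').sub (hg12p.mul hib)).mul hdinv).smul hb'p
      simpa [div_eq_mul_inv] using this
  set D : ℝ × EuclideanSpace ℝ (Fin N) → (ℝ × EuclideanSpace ℝ (Fin N)) →L[ℝ]
      (ℝ × EuclideanSpace ℝ (Fin N)) := fun x => fderiv ℝ Ψ x with hDdef
  have hD : ∀ x, HasFDerivAt Ψ (D x) x := fun x => (hΨd x).hasFDerivAt
  -- kernel direction
  set v : ℝ → EuclideanSpace ℝ (Fin N) := fun θ => b' θ - (g12 θ / g11 θ) • b θ with hvdef
  have hv0 : ∀ θ, v θ ≠ 0 := by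
    intro θ h
    have h' : (-(g12 θ / g11 θ)) • b θ + (1:ℝ) • b' θ = 0 := by
      rw [neg_smul, one_smul, add_comm, ← sub_eq_add_neg]
      simpa [hvdef] using h
    exact one_ne_zero (hpair θ _ _ h').2
  have hvb : ∀ θ, ⟪v θ, b θ⟫ = 0 := by
    intro θ
    have hPne : ⟪b θ, b θ⟫ ≠ 0 := (hselfpos _ (hb0 θ)).ne'
    simp only [hvdef, inner_sub_left, real_inner_smul_left, hcomm θ, hg11def, hg12def]
    rw [div_mul_cancel₀ _ hPne, sub_self]
  have hvb' : ∀ θ, ⟪v θ, b' θ⟫ = d θ / g11 θ := by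
    intro θ
    obtain ⟨P, hP, hPpos⟩ : ∃ P, ⟪b θ, b θ⟫ = P ∧ 0 < P := ⟨_, rfl, hselfpos _ (hb0 θ)⟩
    obtain ⟨Q, hQ⟩ : ∃ Q, ⟪b θ, b' θ⟫ = Q := ⟨_, rfl⟩
    obtain ⟨R, hR⟩ : ∃ R, ⟪b' θ, b' θ⟫ = R := ⟨_, rfl⟩
    simp only [hvdef, inner_sub_left, real_inner_smul_left, hcomm θ, hddef, hg11def, hg12def,
      hg22def]
    rw [hP, hQ, hR]
    field_simp
  -- Ψ is constant along (0, v θ)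
  have hconst : ∀ (θ : ℝ) (a : EuclideanSpace ℝ (Fin N)) (t : ℝ),
      Ψ (θ, a + t • v θ) = Ψ (θ, a) := by
    intro θ a t
    have e1 : ⟪a + t • v θ, b θ⟫ = ⟪a, b θ⟫ := by
      rw [inner_add_left, real_inner_smul_left, hvb θ]; ring
    have e2 : ⟪a + t • v θ, b' θ⟫ = ⟪a, b' θ⟫ + t * (d θ / g11 θ) := by
      rw [inner_add_left, real_inner_smul_left, hvb' θ]
    obtain ⟨A, hA⟩ : ∃ A, ⟪a, b θ⟫ = A := ⟨_, rfl⟩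
    obtain ⟨B, hB⟩ : ∃ B, ⟪a, b' θ⟫ = B := ⟨_, rfl⟩
    simp only [hΨdef, e1, e2, hA, hB]
    refine Prod.ext rfl ?_
    simp only [hvdef]
    match_scalars <;> field_simp [(hg11 θ).ne', (hd θ).ne'] <;> ring
  -- derivative of Ψ kills (0, v θ)
  have hker : ∀ (θ : ℝ) (a : EuclideanSpace ℝ (Fin N)),
      D (θ, a) ((0 : ℝ), v θ) = 0 := by
    intro θ a
    set M : ℝ →L[ℝ] ℝ × EuclideanSpace ℝ (Fin N) :=
      (ContinuousLinearMap.id ℝ ℝ).smulRight ((0:ℝ), v θ) with hMdef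
    have hcurve : HasFDerivAt (fun t : ℝ => ((θ:ℝ), a + t • v θ)) M 0 := by
      have heq : (fun t : ℝ => ((θ:ℝ), a + t • v θ)) = fun t : ℝ => (θ, a) + M t := by
        funext t
        simp [hMdef, Prod.ext_iff, Prod.smul_def]
      rw [heq]
      exact M.hasFDerivAt.const_add (θ, a)
    have h0pt : HasFDerivAt Ψ (D (θ, a)) ((fun t : ℝ => ((θ:ℝ), a + t • v θ)) 0) := by
      simpa using hD (θ, a)
    have hcomp : HasFDerivAt (fun t : ℝ => Ψ (θ, a + t • v θ)) ((D (θ, a)).comp M) 0 :=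
      h0pt.comp 0 hcurve
    have hconst' : (fun t : ℝ => Ψ (θ, a + t • v θ)) = fun _ => Ψ (θ, a) := by
      funext t; exact hconst θ a t
    rw [hconst'] at hcomp
    have h0 : ((D (θ, a)).comp M) = 0 := hcomp.unique (hasFDerivAt_const _ _)
    have hM1 : M 1 = ((0:ℝ), v θ) := by
      rw [hMdef]
      simp
    have h1 : ((D (θ, a)).comp M) 1 = (0 : ℝ →L[ℝ] ℝ × EuclideanSpace ℝ (Fin N)) 1 := by
      rw [h0]
    rw [ContinuousLinearMap.comp_apply, hM1, ContinuousLinearMap.zero_apply] at h1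
    exact h1
  -- determinant vanishes
  have hdet : ∀ x, (D x).det = 0 := by
    rintro ⟨θ, a⟩
    have h6 : ∃ m : ℝ × EuclideanSpace ℝ (Fin N), m ≠ 0 ∧
        ((D (θ, a) : (ℝ × EuclideanSpace ℝ (Fin N)) →ₗ[ℝ]
          (ℝ × EuclideanSpace ℝ (Fin N)))) m = 0 := by
      refine ⟨((0:ℝ), v θ), ?_, hker θ a⟩
      simp [Prod.ext_iff, hv0 θ]
    exact ((LinearMap.hasEigenvalue_zero_tfae
      ((D (θ, a) : (ℝ × EuclideanSpace ℝ (Fin N)) →ₗ[ℝ]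
        (ℝ × EuclideanSpace ℝ (Fin N))))).out 3 5).mpr h6
  -- image of Ψ is null
  haveI hHaar : (volume : Measure (ℝ × EuclideanSpace ℝ (Fin N))).IsAddHaarMeasure := by
    rw [Measure.volume_eq_prod]
    infer_instance
  have himg : volume (Ψ '' Set.univ) = 0 :=
    addHaar_image_eq_zero_of_det_fderivWithin_eq_zero volume
      (fun x _ => (hD x).hasFDerivWithinAt) (fun x _ => hdet x)
  -- ℝ × C is contained in the image
  have hsub : (Set.univ : Set ℝ) ×ˢ {a : EuclideanSpace ℝ (Fin N) |
      ∃ θ : ℝ, ⟪a, b θ⟫ = 0 ∧ ⟪a, b' θ⟫ = 0} ⊆ Ψ '' Set.univ := by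
    rintro ⟨t, c⟩ ⟨-, θ, h1, h2⟩
    refine ⟨(θ, c + (t / g11 θ) • b θ), Set.mem_univ _, ?_⟩
    have e1 : ⟪c + (t / g11 θ) • b θ, b θ⟫ = t := by
      have hPne : ⟪b θ, b θ⟫ ≠ 0 := (hselfpos _ (hb0 θ)).ne'
      rw [inner_add_left, real_inner_smul_left, h1, zero_add]
      simp only [hg11def]
      rw [div_mul_cancel₀ _ hPne]
    have e2 : ⟪c + (t / g11 θ) • b θ, b' θ⟫ = (t / g11 θ) * g12 θ := by
      rw [inner_add_left, real_inner_smul_left, h2]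
      simp only [hg12def]
      ring
    simp only [hΨdef, e1, e2]
    refine Prod.ext rfl ?_
    obtain ⟨P, hP, hPpos⟩ : ∃ P, g11 θ = P ∧ 0 < P := ⟨_, rfl, hg11 θ⟩
    obtain ⟨Q, hQ⟩ : ∃ Q, g12 θ = Q := ⟨_, rfl⟩
    obtain ⟨R, hR⟩ : ∃ R, g22 θ = R := ⟨_, rfl⟩
    obtain ⟨S, hS, hSpos, hSval⟩ : ∃ S, d θ = S ∧ 0 < S ∧ S = P * R - Q * Q := by
      refine ⟨d θ, rfl, hd θ, ?_⟩
      simp only [hddef]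
      rw [hP, hQ, hR]
    have hPRQ : P * R - Q * Q ≠ 0 := by rw [← hSval]; exact hSpos.ne'
    have hcoef1 : (g22 θ * t - g12 θ * (t / g11 θ * g12 θ)) / d θ = t / g11 θ := by
      rw [hP, hQ, hR, hS, hSval]
      field_simp [hPRQ, hPpos.ne']
      have hX : R * P - Q ^ 2 ≠ 0 := by intro h; apply hPRQ; linarith
      exact mul_div_cancel_right₀ t hX
    have hcoef2 : (g11 θ * (t / g11 θ * g12 θ) - g12 θ * t) / d θ = 0 := by
      rw [hP, hQ, hS, div_eq_zero_iff]
      left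
      field_simp
      ring
    rw [hcoef1, hcoef2]
    simp
  have hprod : volume ((Set.univ : Set ℝ) ×ˢ {a : EuclideanSpace ℝ (Fin N) |
      ∃ θ : ℝ, ⟪a, b θ⟫ = 0 ∧ ⟪a, b' θ⟫ = 0}) = 0 :=
    measure_mono_null hsub himg
  rw [Measure.volume_eq_prod, Measure.prod_prod, Real.volume_univ] at hprod
  rcases mul_eq_zero.mp hprod with h | h
  · exact absurd h ENNReal.top_ne_zero
  · exact h

/-- Almost sure simplicity of zeros (abstract form of Lemma 3.2): the set of coefficient
vectors `a` for which the random combination has a double zero on `[0, ℓ]` is a Lebesgue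
null set. -/
theorem double_zeros_measure_zero (ℓ : ℝ) (hℓ : 0 < ℓ) (N : ℕ) (hN : 2 ≤ N)
    (b : ℝ → EuclideanSpace ℝ (Fin N))
    (hsmooth : ContDiff ℝ (⊤ : ℕ∞) b)
    (hper : ∀ θ : ℝ, b (θ + ℓ) = b θ)
    (hind : ∀ θ : ℝ, LinearIndependent ℝ ![b θ, deriv b θ]) :
    volume {a : EuclideanSpace ℝ (Fin N) |
      ∃ θ ∈ Set.Icc (0 : ℝ) ℓ, (inner ℝ a (b θ) : ℝ) = 0 ∧ (inner ℝ a (deriv b θ) : ℝ) = 0} = 0 := by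
  refine measure_mono_null ?_ (double_zeros_aux N b hsmooth hind)
  rintro a ⟨θ, -, h1, h2⟩
  exact ⟨θ, h1, h2⟩
end

section
/- Local constancy of the zero count for families without double zeros: Let ℓ > 0, let U be an open subset of ℝ^m, and let f : U × ℝ → ℝ be continuously differentiable with f(ω, θ+ℓ) = f(ω, θ) for all ω ∈ U and θ ∈ ℝ. Assume that for every ω ∈ U there is no θ ∈ ℝ with f(ω,θ) = 0 and ∂_θ f(ω,θ) = 0. Then for every ω ∈ U the set {θ ∈ [0,ℓ) : f(ω,θ) = 0} is finite, and the function ω ↦ #{θ ∈ [0,ℓ) : f(ω,θ) = 0} is locally constant on U. -/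
open Set Filter Topology

/-!
Near a simple zero `c` of `f (ω, ·)`, every slice `f (x, ·)` with `x` close to `ω` is strictly
monotone on one fixed small interval around `c` and changes sign across it, so it has exactly one
zero there. On the compact rest of a window `[a, b]` whose endpoints are not zeros, `f (ω, ·)` does
not vanish, and by the tube lemma neither does `f (x, ·)` for `x` near `ω`. Hence the zeros of
`f (x, ·)` in `[a, b]` correspond bijectively to those of `f (ω, ·)`. By periodicity, the count over
`[0, ℓ)` equals the count over `[a, a + ℓ]` for any `a` with `f (ω, a) ≠ 0`.
-/

lemma existsUnique_zero_of_strictMonoOn {g : ℝ → ℝ} {a b : ℝ} (hab : a ≤ b)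
    (hg : ContinuousOn g (Icc a b)) (hmono : StrictMonoOn g (Icc a b)) (ha : g a < 0)
    (hb : 0 < g b) : ∃! t, t ∈ Icc a b ∧ g t = 0 := by
  obtain ⟨t, ht, hgt⟩ := intermediate_value_Icc hab hg ⟨ha.le, hb.le⟩
  exact ⟨t, ⟨ht, hgt⟩, fun s ⟨hs, hgs⟩ => hmono.injOn hs ht (hgs.trans hgt.symm)⟩

lemma Function.Periodic.ncard_sep_Ico_eq {α : Type*} [AddCommGroup α] [LinearOrder α]
    [IsOrderedAddMonoid α] [Archimedean α] {P : α → Prop} {p : α} (hP : Function.Periodic P p)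
    (hp : 0 < p) (a b : α) :
    {t ∈ Ico a (a + p) | P t}.ncard = {t ∈ Ico b (b + p) | P t}.ncard := by
  refine BijOn.ncard_eq (f := toIcoMod hp b) ⟨?_, ?_, ?_⟩
  · rintro t ⟨-, ht⟩
    exact ⟨toIcoMod_mem_Ico hp b t, by rwa [toIcoMod, hP.sub_zsmul_eq]⟩
  · rintro s ⟨hs, -⟩ t ⟨ht, -⟩ hst
    rw [← (toIcoMod_eq_self hp).2 hs, ← (toIcoMod_eq_self hp).2 ht, ← toIcoMod_toIcoMod hp a b s,
      hst, toIcoMod_toIcoMod]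
  · rintro t ⟨ht, hPt⟩
    refine ⟨toIcoMod hp a t, ⟨toIcoMod_mem_Ico hp a t, ?_⟩, ?_⟩
    · rwa [toIcoMod, hP.sub_zsmul_eq]
    · rw [toIcoMod_toIcoMod, (toIcoMod_eq_self hp).2 ht]

lemma Set.ncard_eq_of_existsUnique_mem {α β : Type*} {Z : Set α} {S : Set β} {I : α → Set β}
    (hdisj : Z.PairwiseDisjoint I) (hcover : S ⊆ ⋃ z ∈ Z, I z)
    (huniq : ∀ z ∈ Z, ∃! t, t ∈ I z ∩ S) : S.ncard = Z.ncard := by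
  choose g hg hgu using huniq
  refine (ncard_congr g (fun z hz => (hg z hz).2) (fun z z' hz hz' h => ?_) fun t ht => ?_).symm
  · by_contra hne
    exact Set.disjoint_left.1 (hdisj hz hz' hne) (hg z hz).1 (h ▸ (hg z' hz').1)
  · obtain ⟨z, hz, htz⟩ := mem_iUnion₂.1 (hcover ht)
    exact ⟨z, hz, (hgu z hz t ⟨htz, ht⟩).symm⟩

lemma Set.Finite.exists_pos_pairwiseDisjoint_Icc {Z : Set ℝ} (hZ : Z.Finite) {a b : ℝ}
    (hZab : Z ⊆ Ioo a b) :
    ∃ δ > 0, (∀ z ∈ Z, Icc (z - δ) (z + δ) ⊆ Ioo a b) ∧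
      Z.PairwiseDisjoint fun z => Icc (z - δ) (z + δ) := by
  have hsmall : ∀ᶠ δ in 𝓝 (0 : ℝ), ∀ z ∈ Z, (δ < z - a ∧ δ < b - z) ∧
      ∀ z' ∈ Z, z' ≠ z → δ < |z' - z| / 2 := by
    refine hZ.eventually_all.2 fun z hz => ?_
    refine ((eventually_lt_nhds (sub_pos.2 (hZab hz).1)).and
      (eventually_lt_nhds (sub_pos.2 (hZab hz).2))).and (hZ.eventually_all.2 fun z' _ => ?_)
    rcases eq_or_ne z' z with rfl | hne
    · exact Eventually.of_forall fun _ h => absurd rfl h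
    · exact (eventually_lt_nhds (by positivity)).mono fun _ h _ => h
  obtain ⟨δ, hδZ, hδ⟩ := ((hsmall.filter_mono nhdsWithin_le_nhds).and
    (self_mem_nhdsWithin (s := Ioi 0))).exists
  refine ⟨δ, hδ, fun z hz t ht => ⟨?_, ?_⟩, fun z hz z' hz' hne => ?_⟩
  · linarith [ht.1, (hδZ z hz).1.1]
  · linarith [ht.2, (hδZ z hz).1.2]
  · refine Set.disjoint_left.2 fun t ht ht' => ?_
    have := (hδZ z hz).2 z' hz' hne.symm
    cases abs_cases (z' - z) <;> linarith [ht.1, ht.2, ht'.1, ht'.2]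

lemma IsCompact.finite_zeros_of_hasDerivAt_ne_zero {K : Set ℝ} (hK : IsCompact K)
    {g g' : ℝ → ℝ} (hg : ∀ t, HasDerivAt g (g' t) t) (hsimple : ∀ t, g t = 0 → g' t ≠ 0) :
    {t ∈ K | g t = 0}.Finite := by
  have hcont : Continuous g := continuous_iff_continuousAt.2 fun t => (hg t).continuousAt
  refine (hK.inter_right (isClosed_singleton.preimage hcont)).finite ?_
  rw [isDiscrete_iff_nhdsNE]
  rintro t ⟨-, ht⟩
  rw [inf_principal_eq_bot]
  filter_upwards [(hg t).eventually_ne (hsimple t ht)] with s hs hmem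
  exact hs hmem.2

section SimpleZeros

variable {X : Type*} [TopologicalSpace X] {U : Set X} {f φ : X × ℝ → ℝ}

lemma ContinuousAt.curry_left {Y Z : Type*} [TopologicalSpace Y] [TopologicalSpace Z]
    {g : X × Y → Z} {x : X} {y : Y} (hg : ContinuousAt g (x, y)) :
    ContinuousAt (fun x' => g (x', y)) x :=
  hg.comp (f := fun x' => (x', y)) (Continuous.prodMk_left y).continuousAt

lemma exists_eventually_existsUnique_zero_Icc (hU : IsOpen U)
    (hf : ∀ x ∈ U, ∀ t, ContinuousAt f (x, t))
    (hφ : ∀ x ∈ U, ∀ t, ContinuousAt φ (x, t))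
    (hder : ∀ x ∈ U, ∀ t, HasDerivAt (fun s => f (x, s)) (φ (x, t)) t)
    {ω : X} (hω : ω ∈ U) {c : ℝ} (hc : f (ω, c) = 0) (hφc : φ (ω, c) ≠ 0) {r₀ : ℝ}
    (hr₀ : 0 < r₀) :
    ∃ r ∈ Ioc 0 r₀, ∀ᶠ x in 𝓝 ω, ∃! t, t ∈ Icc (c - r) (c + r) ∧ f (x, t) = 0 := by
  wlog hpos : 0 < φ (ω, c) generalizing f φ
  · have hneg := this (f := -f) (φ := -φ) (fun x hx t => (hf x hx t).neg)
      (fun x hx t => (hφ x hx t).neg) (fun x hx t => (hder x hx t).neg) (by simp [hc])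
      (by simpa using hφc) (by simpa using (not_lt.1 hpos).lt_of_ne hφc)
    simpa using hneg
  have hgood : ∀ᶠ p in 𝓝 ω ×ˢ 𝓝 c, p.1 ∈ U ∧ 0 < φ p := by
    rw [← nhds_prod_eq]
    have hfst : ∀ᶠ p : X × ℝ in 𝓝 (ω, c), p.1 ∈ U := (hU.preimage continuous_fst).mem_nhds hω
    exact hfst.and (continuousAt_const.eventually_lt (hφ ω hω c) hpos)
  obtain ⟨pa, hpa, pb, hpb, hprod⟩ := eventually_prod_iff.1 hgood
  obtain ⟨ε, hε, hεpb⟩ := (nhds_basis_Icc_pos c).eventually_iff.1 hpb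
  set r := min ε r₀
  have hr : 0 < r := lt_min hε hr₀
  have hrε : Icc (c - r) (c + r) ⊆ Icc (c - ε) (c + ε) :=
    Icc_subset_Icc (by linarith [min_le_left ε r₀]) (by linarith [min_le_left ε r₀])
  have hmem : ∀ x, pa x → x ∈ U := fun x hx => (hprod hx hpb.self_of_nhds).1
  have hcont : ∀ x, pa x → ContinuousOn (fun s => f (x, s)) (Icc (c - r) (c + r)) :=
    fun x hx s _ => (hder x (hmem x hx) s).continuousAt.continuousWithinAt
  have hmono : ∀ x, pa x → StrictMonoOn (fun s => f (x, s)) (Icc (c - r) (c + r)) :=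
    fun x hx => strictMonoOn_of_hasDerivWithinAt_pos (convex_Icc _ _) (hcont x hx)
      (fun s _ => (hder x (hmem x hx) s).hasDerivWithinAt)
      (fun s hs => (hprod hx (hεpb (hrε (interior_subset hs)))).2)
  have hcmem : c ∈ Icc (c - r) (c + r) := ⟨by linarith, by linarith⟩
  have hlo : f (ω, c - r) < 0 :=
    hc ▸ hmono ω hpa.self_of_nhds (left_mem_Icc.2 (by linarith)) hcmem (by linarith)
  have hhi : 0 < f (ω, c + r) :=
    hc ▸ hmono ω hpa.self_of_nhds hcmem (right_mem_Icc.2 (by linarith)) (by linarith)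
  refine ⟨r, ⟨hr, min_le_right ε r₀⟩, ?_⟩
  filter_upwards [hpa, (hf ω hω _).curry_left.eventually_lt continuousAt_const hlo,
    continuousAt_const.eventually_lt (hf ω hω _).curry_left hhi] with x hx hxlo hxhi
  exact existsUnique_zero_of_strictMonoOn (by linarith) (hcont x hx) (hmono x hx) hxlo hxhi

lemma eventually_ncard_zeros_Icc_eq (hU : IsOpen U) (hf : ∀ x ∈ U, ∀ t, ContinuousAt f (x, t))
    (hφ : ∀ x ∈ U, ∀ t, ContinuousAt φ (x, t))
    (hder : ∀ x ∈ U, ∀ t, HasDerivAt (fun s => f (x, s)) (φ (x, t)) t)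
    (hsimple : ∀ x ∈ U, ∀ t, f (x, t) = 0 → φ (x, t) ≠ 0) {ω : X} (hω : ω ∈ U) {a b : ℝ}
    (ha : f (ω, a) ≠ 0) (hb : f (ω, b) ≠ 0) :
    ∀ᶠ x in 𝓝 ω, {t ∈ Icc a b | f (x, t) = 0}.ncard = {t ∈ Icc a b | f (ω, t) = 0}.ncard := by
  set Z := {t ∈ Icc a b | f (ω, t) = 0}
  have hZ : Z.Finite :=
    isCompact_Icc.finite_zeros_of_hasDerivAt_ne_zero (hder ω hω) (hsimple ω hω)
  have hZab : Z ⊆ Ioo a b := fun t ⟨⟨hat, htb⟩, ht⟩ =>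
    ⟨hat.lt_of_ne (by rintro rfl; exact ha ht), htb.lt_of_ne (by rintro rfl; exact hb ht)⟩
  obtain ⟨δ, hδ, hδab, hδdisj⟩ := hZ.exists_pos_pairwiseDisjoint_Icc hZab
  have hradius : ∀ z ∈ Z, ∃ r ∈ Ioc 0 δ,
      ∀ᶠ x in 𝓝 ω, ∃! t, t ∈ Icc (z - r) (z + r) ∧ f (x, t) = 0 := fun z hz =>
    exists_eventually_existsUnique_zero_Icc hU hf hφ hder hω hz.2 (hsimple ω hω z hz.2) hδ
  choose! r hr huniq using hradius
  have hrδ : ∀ z ∈ Z, Icc (z - r z) (z + r z) ⊆ Icc (z - δ) (z + δ) := fun z hz =>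
    Icc_subset_Icc (by linarith [(hr z hz).2]) (by linarith [(hr z hz).2])
  have hK : ∀ᶠ x in 𝓝 ω, ∀ t ∈ Icc a b \ ⋃ z ∈ Z, Ioo (z - r z) (z + r z), f (x, t) ≠ 0 := by
    refine (isCompact_Icc.diff (isOpen_biUnion fun _ _ => isOpen_Ioo))
      |>.eventually_forall_of_forall_eventually fun t ht =>
        (hf ω hω t).eventually_ne fun h0 => ht.2 (mem_biUnion ⟨ht.1, h0⟩ ?_)
    have := (hr t ⟨ht.1, h0⟩).1
    exact ⟨by linarith, by linarith⟩
  filter_upwards [hK, hZ.eventually_all.2 huniq] with x hxK hxuniq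
  refine Set.ncard_eq_of_existsUnique_mem (hδdisj.mono_on hrδ) (fun t ht => ?_) fun z hz => ?_
  · by_contra hI
    refine hxK t ⟨ht.1, fun hIoo => hI ?_⟩ ht.2
    exact biUnion_mono subset_rfl (fun _ _ => Ioo_subset_Icc_self) hIoo
  · have hIab : Icc (z - r z) (z + r z) ⊆ Icc a b :=
      ((hrδ z hz).trans (hδab z hz)).trans Ioo_subset_Icc_self
    exact (existsUnique_congr fun t => ⟨fun h => ⟨h.1, hIab h.1, h.2⟩, fun h => ⟨h.1, h.2.2⟩⟩).1
      (hxuniq z hz)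

lemma eventually_ncard_zeros_Ico_eq (hU : IsOpen U) (hf : ∀ x ∈ U, ∀ t, ContinuousAt f (x, t))
    (hφ : ∀ x ∈ U, ∀ t, ContinuousAt φ (x, t))
    (hder : ∀ x ∈ U, ∀ t, HasDerivAt (fun s => f (x, s)) (φ (x, t)) t)
    (hsimple : ∀ x ∈ U, ∀ t, f (x, t) = 0 → φ (x, t) ≠ 0) {ℓ : ℝ} (hℓ : 0 < ℓ)
    (hper : ∀ x ∈ U, Function.Periodic (fun t => f (x, t)) ℓ) {ω : X} (hω : ω ∈ U) :
    ∀ᶠ x in 𝓝 ω, {t ∈ Ico 0 ℓ | f (x, t) = 0}.ncard = {t ∈ Ico 0 ℓ | f (ω, t) = 0}.ncard := by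
  obtain ⟨a, ha0, ha⟩ := (Icc_infinite hℓ).exists_notMem_finite
    (isCompact_Icc.finite_zeros_of_hasDerivAt_ne_zero (hder ω hω) (hsimple ω hω))
  replace ha : f (ω, a) ≠ 0 := fun h => ha ⟨ha0, h⟩
  have hshift : ∀ x ∈ U, f (x, a) ≠ 0 →
      {t ∈ Ico 0 ℓ | f (x, t) = 0}.ncard = {t ∈ Icc a (a + ℓ) | f (x, t) = 0}.ncard := by
    intro x hx hxa
    have h := Function.Periodic.ncard_sep_Ico_eq (P := fun t => f (x, t) = 0)
      ((hper x hx).comp (· = 0)) hℓ 0 a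
    rw [zero_add] at h
    rw [h]
    congr 1
    ext t
    refine ⟨fun ⟨ht, h0⟩ => ⟨Ico_subset_Icc_self ht, h0⟩,
      fun ⟨ht, h0⟩ => ⟨⟨ht.1, ht.2.lt_of_ne ?_⟩, h0⟩⟩
    rintro rfl
    exact hxa ((hper x hx a).symm.trans h0)
  filter_upwards [hU.mem_nhds hω, (hf ω hω a).curry_left.eventually_ne ha,
    eventually_ncard_zeros_Icc_eq hU hf hφ hder hsimple hω ha ((hper ω hω a).trans_ne ha)]
    with x hx hxa hcount
  rw [hshift x hx hxa, hshift ω hω ha, hcount]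

end SimpleZeros

/-- Local constancy of the zero count for families without double zeros. -/
theorem zero_count_locally_constant (ℓ : ℝ) (hℓ : 0 < ℓ) (m : ℕ)
    (U : Set (EuclideanSpace ℝ (Fin m))) (hU : IsOpen U)
    (f : EuclideanSpace ℝ (Fin m) × ℝ → ℝ)
    (hf : ContDiffOn ℝ 1 f (U ×ˢ (Set.univ : Set ℝ)))
    (hper : ∀ ω ∈ U, ∀ θ : ℝ, f (ω, θ + ℓ) = f (ω, θ))
    (hnd : ∀ ω ∈ U, ∀ θ : ℝ, ¬ (f (ω, θ) = 0 ∧ deriv (fun t => f (ω, t)) θ = 0)) :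
    (∀ ω ∈ U, {θ ∈ Set.Ico (0 : ℝ) ℓ | f (ω, θ) = 0}.Finite) ∧
    (∀ ω ∈ U, ∀ᶠ ω' in nhdsWithin ω U,
      {θ ∈ Set.Ico (0 : ℝ) ℓ | f (ω', θ) = 0}.ncard
        = {θ ∈ Set.Ico (0 : ℝ) ℓ | f (ω, θ) = 0}.ncard) := by
  set φ := fun p => fderiv ℝ f p (0, 1)
  have hnhds : ∀ x ∈ U, ∀ t : ℝ, U ×ˢ univ ∈ 𝓝 (x, t) := fun x hx t =>
    (hU.prod isOpen_univ).mem_nhds ⟨hx, mem_univ t⟩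
  have hfc : ∀ x ∈ U, ∀ t, ContinuousAt f (x, t) := fun x hx t =>
    hf.continuousOn.continuousAt (hnhds x hx t)
  have hφ : ∀ x ∈ U, ∀ t, ContinuousAt φ (x, t) := fun x hx t =>
    ((hf.continuousOn_fderiv_of_isOpen (hU.prod isOpen_univ) le_rfl).clm_apply
      continuousOn_const).continuousAt (hnhds x hx t)
  have hder : ∀ x ∈ U, ∀ t, HasDerivAt (fun s => f (x, s)) (φ (x, t)) t := fun x hx t =>
    ((hf.differentiableOn one_ne_zero).differentiableAt (hnhds x hx t)).hasFDerivAt.comp_hasDerivAt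
      t ((hasDerivAt_const t x).prodMk (hasDerivAt_id t))
  have hsimple : ∀ x ∈ U, ∀ t, f (x, t) = 0 → φ (x, t) ≠ 0 := fun x hx t h0 h0' =>
    hnd x hx t ⟨h0, (hder x hx t).deriv.trans h0'⟩
  refine ⟨fun ω hω => ?_, fun ω hω => ?_⟩
  · exact (isCompact_Icc.finite_zeros_of_hasDerivAt_ne_zero (hder ω hω)
      (hsimple ω hω)).subset fun t ht => ⟨Ico_subset_Icc_self ht.1, ht.2⟩
  · exact (eventually_ncard_zeros_Ico_eq hU hfc hφ hder hsimple hℓ hper hω).filter_mono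
      nhdsWithin_le_nhds
end

section
/- Kac counting limit: Let ℓ > 0 and let V : ℝ → ℝ be continuously differentiable and ℓ-periodic, and assume V has no double zeros, i.e. there is no θ with V(θ) = 0 and V'(θ) = 0. Then lim_{ε → 0⁺} (1/(2ε)) ∫_0^ℓ 1_{[−ε,ε]}(V(θ)) · |V'(θ)| dθ = #{θ ∈ [0,ℓ) : V(θ) = 0}. -/
/-!
Away from its zeros `|V|` is bounded below on a period, so for small `ε` the integrand vanishes
there. Near a zero `t` the derivative does not vanish, so `V` is injective on a small interval
`I ∋ t` and, by the one-dimensional change of variables formula,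
`∫_I 1_{[-ε,ε]}(V) |V'| = |V(I) ∩ [-ε,ε]| = 2ε` as soon as `[-ε,ε] ⊆ V(I)`, which holds for small
`ε` by the inverse function theorem. Zeros are isolated, hence finitely many per period. By
periodicity the period may start at a point where `V ≠ 0`; cutting it at such points around each
zero adds these contributions up.
-/

open MeasureTheory Filter Set Topology

noncomputable def crossingDensity (V : ℝ → ℝ) (ε θ : ℝ) : ℝ :=
  (Icc (-ε) ε).indicator (fun _ => (1 : ℝ)) (V θ) * |deriv V θ|

def KacCountsZeros (V : ℝ → ℝ) (a b : ℝ) : Prop :=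
  ∀ᶠ ε in 𝓝[>] 0, ∫ θ in a..b, crossingDensity V ε θ = 2 * ε * {θ ∈ Ico a b | V θ = 0}.ncard

theorem eventually_Icc_subset_of_mem_nhds_zero {U : Set ℝ} (hU : U ∈ 𝓝 0) :
    ∀ᶠ ε in 𝓝[>] 0, Icc (-ε) ε ⊆ U := by
  filter_upwards [nhdsWithin_le_nhds (eventually_closedBall_subset hU)] with ε hε
  simpa [Real.closedBall_eq_Icc] using hε

theorem exists_Icc_subset_of_mem_nhds {s : Set ℝ} {t : ℝ} (hs : s ∈ 𝓝 t) :
    ∃ u v, u < t ∧ t < v ∧ Icc u v ⊆ s := by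
  obtain ⟨δ, hδ, hball⟩ := Metric.mem_nhds_iff.1 hs
  refine ⟨t - δ / 2, t + δ / 2, by linarith, by linarith, ?_⟩
  rw [← Real.closedBall_eq_Icc]
  exact (Metric.closedBall_subset_ball (by linarith)).trans hball

section

variable {V : ℝ → ℝ}

theorem finite_zeros_of_isCompact (hV : Differentiable ℝ V)
    (hnd : ∀ θ : ℝ, ¬ (V θ = 0 ∧ deriv V θ = 0)) {s : Set ℝ} (hs : IsCompact s) :
    {θ ∈ s | V θ = 0}.Finite := by
  refine (hs.inter_right (isClosed_eq hV.continuous continuous_const)).finite ?_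
  refine isDiscrete_iff_nhdsNE.2 fun x hx => inf_principal_eq_bot.2 ?_
  filter_upwards [(hV x).hasDerivAt.eventually_ne fun h => hnd x ⟨hx.2, h⟩] with z hz h
  exact hz h.2

theorem finite_zeros_Ico (hV : Differentiable ℝ V) (hnd : ∀ θ : ℝ, ¬ (V θ = 0 ∧ deriv V θ = 0))
    (a b : ℝ) : {θ ∈ Ico a b | V θ = 0}.Finite :=
  (finite_zeros_of_isCompact hV hnd isCompact_Icc).subset
    fun _ hθ => ⟨Ico_subset_Icc_self hθ.1, hθ.2⟩

theorem injOn_of_deriv_ne_zero (hV : Differentiable ℝ V) {s : Set ℝ} (hs : s.OrdConnected)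
    (hd : ∀ θ ∈ s, deriv V θ ≠ 0) : InjOn V s := by
  have hlt : ∀ x ∈ s, ∀ y ∈ s, x < y → V x ≠ V y := fun x hx y hy hxy hVxy => by
    obtain ⟨c, hc, hc0⟩ := exists_deriv_eq_zero hxy hV.continuous.continuousOn hVxy
    exact hd c (hs.out hx hy (Ioo_subset_Icc_self hc)) hc0
  intro x hx y hy hVxy
  by_contra hne
  rcases lt_or_gt_of_ne hne with h | h
  exacts [hlt x hx y hy h hVxy, hlt y hy x hx h hVxy.symm]

theorem exists_Icc_nhds_deriv_ne_zero (hV : ContDiff ℝ 1 V) {t : ℝ} (hdt : deriv V t ≠ 0)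
    {s : Set ℝ} (hs : s ∈ 𝓝 t) : ∃ u v, u < t ∧ t < v ∧ Icc u v ⊆ s ∧
      (∀ θ ∈ Icc u v, deriv V θ ≠ 0) ∧ V u ≠ V t ∧ V v ≠ V t := by
  have hnear : {θ | θ ∈ s ∧ deriv V θ ≠ 0 ∧ (θ ≠ t → V θ ≠ V t)} ∈ 𝓝 t := by
    filter_upwards [hs, (hV.continuous_deriv le_rfl).continuousAt.eventually_ne hdt,
      eventually_nhdsWithin_iff.1 (((hV.differentiable one_ne_zero) t).hasDerivAt.eventually_ne
        hdt)] with θ h₁ h₂ h₃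
    exact ⟨h₁, h₂, h₃⟩
  obtain ⟨u, v, hut, htv, huv⟩ := exists_Icc_subset_of_mem_nhds hnear
  have hu := huv ⟨le_rfl, (hut.trans htv).le⟩
  have hv := huv ⟨(hut.trans htv).le, le_rfl⟩
  exact ⟨u, v, hut, htv, fun θ hθ => (huv hθ).1, fun θ hθ => (huv hθ).2.1, hu.2.2 hut.ne,
    hv.2.2 htv.ne'⟩

theorem intervalIntegrable_crossingDensity (hV : ContDiff ℝ 1 V) (ε a b : ℝ) :
    IntervalIntegrable (crossingDensity V ε) volume a b := by
  have hd : Continuous (deriv V) := hV.continuous_deriv le_rfl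
  refine (hd.abs.intervalIntegrable a b).mono_fun ?_ (Eventually.of_forall fun θ => ?_)
  · exact (((measurable_const.indicator measurableSet_Icc).comp
      hV.continuous.measurable).mul hd.abs.measurable).aestronglyMeasurable
  · simp only [crossingDensity, norm_mul, Real.norm_eq_abs, abs_abs]
    refine mul_le_of_le_one_left (abs_nonneg _) ?_
    rw [indicator_apply]
    split_ifs <;> simp

theorem crossingDensity_periodic {ℓ : ℝ} (hper : Function.Periodic V ℓ) (ε : ℝ) :
    Function.Periodic (crossingDensity V ε) ℓ := by
  intro θ
  have hderiv : deriv V (θ + ℓ) = deriv V θ := by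
    rw [← deriv_comp_add_const, funext hper]
  simp only [crossingDensity, hper θ, hderiv]

theorem ncard_zeros_Ico_add_eq {ℓ : ℝ} (hℓ : 0 < ℓ) (hper : Function.Periodic V ℓ) (a b : ℝ) :
    {θ ∈ Ico a (a + ℓ) | V θ = 0}.ncard = {θ ∈ Ico b (b + ℓ) | V θ = 0}.ncard := by
  have hV_toIcoMod : ∀ c x, V (toIcoMod hℓ c x) = V x := fun c x => by
    rw [← self_sub_toIcoDiv_zsmul, hper.sub_zsmul_eq]
  refine ncard_congr (fun x _ => toIcoMod hℓ b x)
    (fun x hx => ⟨toIcoMod_mem_Ico hℓ b x, (hV_toIcoMod b x).trans hx.2⟩) ?_ ?_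
  · intro x y hx hy hxy
    rw [← (toIcoMod_eq_self hℓ).2 hx.1, ← (toIcoMod_eq_self hℓ).2 hy.1]
    exact (toIcoMod_inj hℓ).2 ((toIcoMod_inj hℓ).1 hxy)
  · intro y hy
    refine ⟨toIcoMod hℓ a y, ⟨toIcoMod_mem_Ico hℓ a y, (hV_toIcoMod a y).trans hy.2⟩, ?_⟩
    simp only [toIcoMod_toIcoMod, (toIcoMod_eq_self hℓ).2 hy.1]

theorem KacCountsZeros.trans (hV : ContDiff ℝ 1 V) (hnd : ∀ θ : ℝ, ¬ (V θ = 0 ∧ deriv V θ = 0))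
    {a b c : ℝ} (hab : a ≤ b) (hbc : b ≤ c) (h₁ : KacCountsZeros V a b)
    (h₂ : KacCountsZeros V b c) : KacCountsZeros V a c := by
  have hfin := finite_zeros_Ico (hV.differentiable one_ne_zero) hnd
  have hdisj : Disjoint {θ ∈ Ico a b | V θ = 0} {θ ∈ Ico b c | V θ = 0} :=
    Ico_disjoint_Ico_same.mono (sep_subset _ _) (sep_subset _ _)
  have hunion : {θ ∈ Ico a c | V θ = 0} = {θ ∈ Ico a b | V θ = 0} ∪ {θ ∈ Ico b c | V θ = 0} := by
    rw [← Ico_union_Ico_eq_Ico hab hbc]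
    exact sep_union
  filter_upwards [h₁, h₂] with ε h₁ h₂
  rw [← intervalIntegral.integral_add_adjacent_intervals
      (intervalIntegrable_crossingDensity hV ε a b) (intervalIntegrable_crossingDensity hV ε b c),
    h₁, h₂, hunion, ncard_union_eq hdisj (hfin a b) (hfin b c)]
  push_cast
  ring

theorem kacCountsZeros_of_forall_ne_zero (hV : Continuous V) {a b : ℝ} (hab : a ≤ b)
    (h : ∀ θ ∈ Icc a b, V θ ≠ 0) : KacCountsZeros V a b := by
  have hK : (V '' Icc a b)ᶜ ∈ 𝓝 0 :=
    ((isCompact_Icc.image hV).isClosed.isOpen_compl).mem_nhds fun ⟨θ, hθ, hVθ⟩ => h θ hθ hVθ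
  have hcount : {θ ∈ Ico a b | V θ = 0} = ∅ :=
    eq_empty_of_forall_notMem fun θ hθ => h θ (Ico_subset_Icc_self hθ.1) hθ.2
  filter_upwards [eventually_Icc_subset_of_mem_nhds_zero hK] with ε hε
  have hzero : EqOn (crossingDensity V ε) 0 (uIcc a b) := fun θ hθ => by
    rw [uIcc_of_le hab] at hθ
    simp [crossingDensity, indicator_of_notMem fun hmem => hε hmem ⟨θ, hθ, rfl⟩]
  rw [intervalIntegral.integral_congr hzero, hcount]
  simp

theorem kacCountsZeros_of_deriv_ne_zero (hV : ContDiff ℝ 1 V) {a b t : ℝ}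
    (hd : ∀ θ ∈ Icc a b, deriv V θ ≠ 0) (ht : t ∈ Ioo a b) (hVt : V t = 0) :
    KacCountsZeros V a b := by
  have hVd : Differentiable ℝ V := hV.differentiable one_ne_zero
  have hinj : InjOn V (Icc a b) := injOn_of_deriv_ne_zero hVd ordConnected_Icc hd
  have htI : t ∈ Icc a b := Ioo_subset_Icc_self ht
  have hcount : {θ ∈ Ico a b | V θ = 0} = {t} := by
    ext θ
    exact ⟨fun hθ => hinj (Ico_subset_Icc_self hθ.1) htI (hθ.2.trans hVt.symm),
      fun hθ => hθ ▸ ⟨⟨ht.1.le, ht.2⟩, hVt⟩⟩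
  have himage : V '' Icc a b ∈ 𝓝 0 := by
    rw [← hVt, ← ((hV.contDiffAt.hasStrictDerivAt one_ne_zero).map_nhds_eq (hd t htI))]
    exact image_mem_map (Icc_mem_nhds ht.1 ht.2)
  filter_upwards [eventually_Icc_subset_of_mem_nhds_zero himage, self_mem_nhdsWithin]
    with ε hsub hε
  calc ∫ θ in a..b, crossingDensity V ε θ
      = ∫ θ in Icc a b, |deriv V θ| • (Icc (-ε) ε).indicator (fun _ => (1 : ℝ)) (V θ) := by
        rw [intervalIntegral.integral_of_le (ht.1.trans ht.2).le, ← integral_Icc_eq_integral_Ioc]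
        simp only [crossingDensity, smul_eq_mul, mul_comm]
    _ = ∫ y in V '' Icc a b, (Icc (-ε) ε).indicator (fun _ => (1 : ℝ)) y :=
        (integral_image_eq_integral_abs_deriv_smul measurableSet_Icc
          (fun θ _ => (hVd θ).hasDerivAt.hasDerivWithinAt) hinj _).symm
    _ = volume.real (Icc (-ε) ε) := by
        rw [setIntegral_indicator measurableSet_Icc, inter_eq_right.2 hsub]
        simp
    _ = 2 * ε * {θ ∈ Ico a b | V θ = 0}.ncard := by
        rw [hcount, ncard_singleton, Real.volume_real_Icc_of_le (by linarith [mem_Ioi.1 hε])]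
        push_cast
        ring

theorem kacCountsZeros_of_ne_zero (hV : ContDiff ℝ 1 V)
    (hnd : ∀ θ : ℝ, ¬ (V θ = 0 ∧ deriv V θ = 0)) {a b : ℝ} (hab : a ≤ b) (hVa : V a ≠ 0)
    (hVb : V b ≠ 0) : KacCountsZeros V a b := by
  obtain ⟨n, hn⟩ : ∃ n, {θ ∈ Ico a b | V θ = 0}.ncard = n := ⟨_, rfl⟩
  induction n using Nat.strong_induction_on generalizing a b with
  | _ n ih =>
  by_cases hzero : ∃ t ∈ Ico a b, V t = 0
  swap
  · push Not at hzero
    refine kacCountsZeros_of_forall_ne_zero hV.continuous hab fun θ hθ => ?_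
    rcases hθ.2.lt_or_eq with hθb | rfl
    exacts [hzero θ ⟨hθ.1, hθb⟩, hVb]
  obtain ⟨t, ht, hVt⟩ := hzero
  have hta : a < t := ht.1.lt_of_ne fun h => hVa (h ▸ hVt)
  have hdt : deriv V t ≠ 0 := fun h => hnd t ⟨hVt, h⟩
  obtain ⟨u, v, hut, htv, hsub, hd, hVu, hVv⟩ :=
    exists_Icc_nhds_deriv_ne_zero hV hdt (Ioo_mem_nhds hta ht.2)
  rw [hVt] at hVu hVv
  have huv : u ≤ v := (hut.trans htv).le
  have hau : a < u := (hsub ⟨le_rfl, huv⟩).1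
  have hvb : v < b := (hsub ⟨huv, le_rfl⟩).2
  have hfewer : ∀ c d, a ≤ c → d ≤ b → t ∉ Ico c d → {θ ∈ Ico c d | V θ = 0}.ncard < n := by
    intro c d hac hdb htcd
    rw [← hn]
    refine ncard_lt_ncard ((ssubset_iff_of_subset ?_).2 ⟨t, ⟨ht, hVt⟩, fun h => htcd h.1⟩) ?_
    · exact fun θ hθ => ⟨Ico_subset_Ico hac hdb hθ.1, hθ.2⟩
    · exact finite_zeros_Ico (hV.differentiable one_ne_zero) hnd a b
  have hleft : KacCountsZeros V a u :=
    ih _ (hfewer a u le_rfl (hut.trans ht.2).le fun h => (h.2.trans hut).false) hau.le hVa hVu rfl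
  have hright : KacCountsZeros V v b :=
    ih _ (hfewer v b (hta.trans htv).le le_rfl fun h => (h.1.trans_lt htv).false) hvb.le hVv hVb
      rfl
  have hmiddle : KacCountsZeros V u v := kacCountsZeros_of_deriv_ne_zero hV hd ⟨hut, htv⟩ hVt
  exact (hleft.trans hV hnd hau.le huv hmiddle).trans hV hnd (hau.le.trans huv) hvb.le hright

end

/-- Kac counting limit: the smoothed zero count of a periodic `C¹` function without
double zeros converges, as `ε → 0⁺`, to the number of zeros in a period. -/
theorem kac_counting_limit (ℓ : ℝ) (hℓ : 0 < ℓ) (V : ℝ → ℝ)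
    (hV : ContDiff ℝ 1 V)
    (hper : ∀ θ : ℝ, V (θ + ℓ) = V θ)
    (hnd : ∀ θ : ℝ, ¬ (V θ = 0 ∧ deriv V θ = 0)) :
    Tendsto (fun ε : ℝ => (1 / (2 * ε)) * ∫ θ in (0 : ℝ)..ℓ,
        Set.indicator (Set.Icc (-ε) ε) (fun _ => (1 : ℝ)) (V θ) * |deriv V θ|)
      (nhdsWithin 0 (Set.Ioi 0))
      (nhds ({θ ∈ Set.Ico (0 : ℝ) ℓ | V θ = 0}.ncard : ℝ)) := by
  obtain ⟨a, hVa⟩ : ∃ a, V a ≠ 0 := by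
    by_contra! hV0
    exact hnd 0 ⟨hV0 0, by simp [funext hV0]⟩
  have hcount : KacCountsZeros V a (a + ℓ) :=
    kacCountsZeros_of_ne_zero hV hnd (by linarith) hVa (by rwa [hper])
  have hshift : ∀ ε, ∫ θ in (0 : ℝ)..ℓ, crossingDensity V ε θ
      = ∫ θ in a..a + ℓ, crossingDensity V ε θ := fun ε => by
    simpa using (crossingDensity_periodic hper ε).intervalIntegral_add_eq 0 a
  rw [← zero_add ℓ, ← ncard_zeros_Ico_add_eq hℓ hper a 0, zero_add]
  refine tendsto_const_nhds.congr' ?_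
  filter_upwards [hcount, self_mem_nhdsWithin] with ε hε hεpos
  change _ = 1 / (2 * ε) * ∫ θ in (0 : ℝ)..ℓ, crossingDensity V ε θ
  rw [hshift, hε]
  field_simp [(mem_Ioi.1 hεpos).ne']
end

section
/- Uniform bound of the smoothed zero count by the number of critical points: Let ℓ > 0 and let V : ℝ → ℝ be continuously differentiable and ℓ-periodic. Assume the set of critical points {θ ∈ [0,ℓ) : V'(θ) = 0} is finite, of cardinality C. Then for every ε > 0, (1/(2ε)) ∫_0^ℓ 1_{[−ε,ε]}(V(θ)) · |V'(θ)| dθ ≤ 2·(2C + 3). -/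
/-!
By Darboux's theorem, `V` is strictly monotone on every interval free of critical points, so
there the change of variables `x = V θ` turns `∫ 1_{[-ε,ε]}(V θ) |V' θ| dθ` into the measure of
a subset of `[-ε, ε]`, which is at most `2ε`. The `C` critical points cut `[0, ℓ]` into at most
`C + 1` such intervals, so the smoothed zero count is at most `C + 1`.
-/

open MeasureTheory Set

theorem injOn_Ioo_of_deriv_ne_zero {V : ℝ → ℝ} (hV : Differentiable ℝ V) {a b : ℝ}
    (hV' : ∀ x ∈ Ioo a b, deriv V x ≠ 0) : InjOn V (Ioo a b) := by
  have hcont := hV.continuous.continuousOn (s := Ioo a b)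
  rcases hasDerivWithinAt_forall_lt_or_forall_gt_of_forall_ne (convex_Ioo a b)
      (fun x _ => (hV x).hasDerivAt.hasDerivWithinAt) hV' with hneg | hpos
  · exact (strictAntiOn_of_deriv_neg (convex_Ioo a b) hcont (by rwa [interior_Ioo])).injOn
  · exact (strictMonoOn_of_deriv_pos (convex_Ioo a b) hcont (by rwa [interior_Ioo])).injOn

section IndicatorComp

variable {V : ℝ → ℝ} {s : Set ℝ}

theorem intervalIntegrable_indicator_comp_mul_abs_deriv (hV : ContDiff ℝ 1 V)
    (hs : MeasurableSet s) (a b : ℝ) :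
    IntervalIntegrable (fun θ => s.indicator (fun _ => (1 : ℝ)) (V θ) * |deriv V θ|)
      volume a b := by
  have hV' : Continuous (deriv V) := hV.continuous_deriv le_rfl
  refine (hV'.abs.intervalIntegrable a b).mono_fun ?_ (ae_of_all _ fun θ => ?_)
  · exact (((measurable_const.indicator hs).comp hV.continuous.measurable).mul
      hV'.abs.measurable).aestronglyMeasurable
  · by_cases h : V θ ∈ s <;> simp [h]

theorem setIntegral_indicator_comp_mul_abs_deriv_le (hV : Differentiable ℝ V)
    (hs : MeasurableSet s) (hs' : volume s ≠ ⊤) {a b : ℝ}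
    (hV' : ∀ x ∈ Ioo a b, deriv V x ≠ 0) :
    ∫ θ in Ioo a b, s.indicator (fun _ => (1 : ℝ)) (V θ) * |deriv V θ| ≤ volume.real s := by
  have hchange := integral_image_eq_integral_abs_deriv_smul measurableSet_Ioo
    (fun x _ => (hV x).hasDerivAt.hasDerivWithinAt) (injOn_Ioo_of_deriv_ne_zero hV hV')
    (s.indicator fun _ => (1 : ℝ))
  simp only [smul_eq_mul, mul_comm |deriv V _|] at hchange
  rw [← hchange, integral_indicator_const _ hs, measureReal_restrict_apply hs, smul_eq_mul,
    mul_one]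
  exact measureReal_mono inter_subset_left hs'

theorem intervalIntegral_indicator_comp_mul_abs_deriv_le (hV : Differentiable ℝ V)
    (hs : MeasurableSet s) (hs' : volume s ≠ ⊤) {a b : ℝ} (hab : a ≤ b)
    (hV' : ∀ x ∈ Ioo a b, deriv V x ≠ 0) :
    ∫ θ in a..b, s.indicator (fun _ => (1 : ℝ)) (V θ) * |deriv V θ| ≤ volume.real s := by
  rw [intervalIntegral.integral_of_le hab, integral_Ioc_eq_integral_Ioo]
  exact setIntegral_indicator_comp_mul_abs_deriv_le hV hs hs' hV'

theorem intervalIntegral_indicator_comp_mul_abs_deriv_le_mul (hV : ContDiff ℝ 1 V)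
    (hs : MeasurableSet s) (hs' : volume s ≠ ⊤) (a : ℝ) (n : ℕ) {b : ℝ} (hab : a ≤ b)
    (hfin : {θ ∈ Ioo a b | deriv V θ = 0}.Finite)
    (hcard : {θ ∈ Ioo a b | deriv V θ = 0}.ncard ≤ n) :
    ∫ θ in a..b, s.indicator (fun _ => (1 : ℝ)) (V θ) * |deriv V θ|
      ≤ (n + 1) * volume.real s := by
  have hdiff : Differentiable ℝ V := hV.differentiable one_ne_zero
  induction n generalizing b with
  | zero =>
    have hempty := (ncard_eq_zero hfin).1 (Nat.le_zero.1 hcard)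
    simpa using intervalIntegral_indicator_comp_mul_abs_deriv_le hdiff hs hs' hab
      fun x hx hx0 => hempty.subset ⟨hx, hx0⟩
  | succ n ih =>
    rcases eq_empty_or_nonempty {θ ∈ Ioo a b | deriv V θ = 0} with hempty | hne
    · have := intervalIntegral_indicator_comp_mul_abs_deriv_le hdiff hs hs' hab
        fun x hx hx0 => hempty.subset ⟨hx, hx0⟩
      have : 0 ≤ volume.real s := measureReal_nonneg
      push_cast
      nlinarith
    obtain ⟨c, ⟨hc, hc0⟩, hmax⟩ := exists_max_image _ id hfin hne
    have hleft : {θ ∈ Ioo a c | deriv V θ = 0} ⊆ {θ ∈ Ioo a b | deriv V θ = 0} \ {c} :=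
      fun x ⟨hx, hx0⟩ => ⟨⟨⟨hx.1, hx.2.trans hc.2⟩, hx0⟩, hx.2.ne⟩
    have hright : ∀ x ∈ Ioo c b, deriv V x ≠ 0 := fun x hx hx0 =>
      (hmax x ⟨⟨hc.1.trans hx.1, hx.2⟩, hx0⟩).not_gt hx.1
    have hleft_card : {θ ∈ Ioo a c | deriv V θ = 0}.ncard ≤ n := by
      have := ncard_sdiff_singleton_add_one
        (show c ∈ {θ ∈ Ioo a b | deriv V θ = 0} from ⟨hc, hc0⟩) hfin
      have := ncard_le_ncard hleft hfin.sdiff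
      omega
    have hac := ih hc.1.le (hfin.sdiff.subset hleft) hleft_card
    have hcb := intervalIntegral_indicator_comp_mul_abs_deriv_le hdiff hs hs' hc.2.le hright
    rw [← intervalIntegral.integral_add_adjacent_intervals
      (intervalIntegrable_indicator_comp_mul_abs_deriv hV hs a c)
      (intervalIntegrable_indicator_comp_mul_abs_deriv hV hs c b)]
    push_cast
    linarith

end IndicatorComp

theorem smoothed_zero_count_le_critical_points_general (ℓ : ℝ) (hℓ : 0 < ℓ) (V : ℝ → ℝ)
    (hV : ContDiff ℝ 1 V)
    (hfin : {θ ∈ Set.Ico (0 : ℝ) ℓ | deriv V θ = 0}.Finite)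
    (C : ℕ) (hC : {θ ∈ Set.Ico (0 : ℝ) ℓ | deriv V θ = 0}.ncard = C) :
    ∀ ε > (0 : ℝ), (1 / (2 * ε)) * ∫ θ in (0 : ℝ)..ℓ,
        Set.indicator (Set.Icc (-ε) ε) (fun _ => (1 : ℝ)) (V θ) * |deriv V θ|
      ≤ 2 * (2 * C + 3) := by
  intro ε hε
  have hsub : {θ ∈ Ioo (0 : ℝ) ℓ | deriv V θ = 0} ⊆ {θ ∈ Ico (0 : ℝ) ℓ | deriv V θ = 0} :=
    fun x ⟨hx, hx0⟩ => ⟨Ioo_subset_Ico_self hx, hx0⟩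
  have hbound := intervalIntegral_indicator_comp_mul_abs_deriv_le_mul (s := Icc (-ε) ε) hV
    measurableSet_Icc measure_Icc_lt_top.ne 0 C hℓ.le (hfin.subset hsub) (hC ▸ ncard_le_ncard hsub hfin)
  rw [Real.volume_real_Icc_of_le (by linarith), sub_neg_eq_add, ← two_mul] at hbound
  calc (1 / (2 * ε)) * ∫ θ in (0 : ℝ)..ℓ,
        Set.indicator (Set.Icc (-ε) ε) (fun _ => (1 : ℝ)) (V θ) * |deriv V θ|
      ≤ (1 / (2 * ε)) * ((C + 1) * (2 * ε)) := by gcongr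
    _ = C + 1 := by field_simp
    _ ≤ 2 * (2 * C + 3) := by linarith

/-- Uniform bound of the smoothed zero count by the number of critical points. -/
theorem smoothed_zero_count_le_critical_points (ℓ : ℝ) (hℓ : 0 < ℓ) (V : ℝ → ℝ)
    (hV : ContDiff ℝ 1 V)
    (hper : ∀ θ : ℝ, V (θ + ℓ) = V θ)
    (hfin : {θ ∈ Set.Ico (0 : ℝ) ℓ | deriv V θ = 0}.Finite)
    (C : ℕ) (hC : {θ ∈ Set.Ico (0 : ℝ) ℓ | deriv V θ = 0}.ncard = C) :
    ∀ ε > (0 : ℝ), (1 / (2 * ε)) * ∫ θ in (0 : ℝ)..ℓ,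
        Set.indicator (Set.Icc (-ε) ε) (fun _ => (1 : ℝ)) (V θ) * |deriv V θ|
      ≤ 2 * (2 * C + 3) :=
  smoothed_zero_count_le_critical_points_general ℓ hℓ V hV hfin C hC
end

section
/- Limit of the smoothed two-dimensional Gaussian integral: Let C = (c_{ij})_{i,j=1,2} be a real symmetric positive definite 2×2 matrix. Then lim_{ε → 0⁺} (1/(2ε)) · (2π)^{−1} (det C)^{−1/2} ∫_{−ε}^{ε} ∫_ℝ |v₂| · exp(−(1/2) ⟨C^{−1} v, v⟩) dv₂ dv₁ = (1/π) · √(c₁₁ c₂₂ − c₁₂²) / c₁₁, where v = (v₁, v₂). -/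
/-!
The inner integral `F v₁ = ∫ |v₂| exp (-½ ⟨C⁻¹ v, v⟩) dv₂` is continuous in `v₁`: completing the
square bounds `⟨M v, v⟩` below by `(det M / M₀₀) v₂²`, which gives an integrable majorant. Hence
the normalised integral over `[-ε, ε]` tends to `F 0` by the fundamental theorem of calculus, and
`F 0 = ∫ |v₂| exp (-d v₂² / 2) = 2 / d` with `d = (C⁻¹)₁₁ = c₁₁ / det C`.
-/

open MeasureTheory Real Matrix Filter

theorem integral_abs_mul_exp_neg_mul_sq {b : ℝ} (hb : 0 < b) :
    ∫ x : ℝ, |x| * exp (-b * x ^ 2) = b⁻¹ := by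
  have hIoi : ∫ x in Set.Ioi (0 : ℝ), x * exp (-b * x ^ 2) = (2 * b)⁻¹ := by
    have hℂ := integral_mul_cexp_neg_mul_sq (b := (b : ℂ)) (by simpa using hb)
    rw [← Complex.ofReal_inj, ← integral_complex_ofReal]
    push_cast
    exact hℂ
  have hsymm := integral_comp_abs (f := fun x => x * exp (-b * x ^ 2))
  simp only [sq_abs] at hsymm
  rw [hsymm, hIoi]
  field_simp

theorem Continuous.tendsto_symm_intervalIntegral_average {f : ℝ → ℝ} (hf : Continuous f) :
    Tendsto (fun ε => 1 / (2 * ε) * ∫ x in -ε..ε, f x) (nhdsWithin 0 (Set.Ioi 0))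
      (nhds (f 0)) := by
  set H := fun t => ∫ x in (0 : ℝ)..t, f x
  have hH : ∀ a, HasDerivAt H (f a) a := fun a => (hf.integral_hasStrictDerivAt 0 a).hasDerivAt
  have hsymm : ∀ t, H t - H (-t) = ∫ x in -t..t, f x := fun t =>
    intervalIntegral.integral_interval_sub_left (hf.intervalIntegrable _ _)
      (hf.intervalIntegrable _ _)
  have hG : HasDerivAt (fun t => ∫ x in -t..t, f x) (2 * f 0) 0 := by
    simp only [← hsymm]
    refine ((hH 0).sub ((hH (-0)).comp 0 (hasDerivAt_neg 0))).congr_deriv ?_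
    rw [neg_zero]
    ring
  have hslope := (hasDerivAt_iff_tendsto_slope.mp hG).mono_left
    (nhdsWithin_mono 0 fun x (hx : x ∈ Set.Ioi 0) => ne_of_gt hx)
  convert hslope.div_const 2 using 2 with ε
  · rw [slope_def_field, neg_zero, intervalIntegral.integral_same]
    ring
  · ring

theorem dotProduct_mulVec_fin_two {R : Type*} [CommRing R] (M : Matrix (Fin 2) (Fin 2) R)
    (x y : R) :
    (M *ᵥ ![x, y]) ⬝ᵥ ![x, y] = M 0 0 * x ^ 2 + (M 0 1 + M 1 0) * x * y + M 1 1 * y ^ 2 := by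
  simp only [dotProduct, mulVec, Fin.sum_univ_two, Fin.isValue, cons_val_zero, cons_val_one,
    cons_val_fin_one]
  ring

namespace Matrix

theorem inv_apply_one_one_fin_two (M : Matrix (Fin 2) (Fin 2) ℝ) : M⁻¹ 1 1 = M 0 0 / M.det := by
  rw [inv_def, adjugate_fin_two]
  simp [Ring.inverse_eq_inv', div_eq_inv_mul]

variable {M : Matrix (Fin 2) (Fin 2) ℝ}

theorem IsHermitian.apply_one_zero_fin_two (hM : M.IsHermitian) : M 1 0 = M 0 1 := by
  simpa using hM.apply 0 1

theorem IsHermitian.det_fin_two (hM : M.IsHermitian) : M.det = M 0 0 * M 1 1 - M 0 1 ^ 2 := by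
  rw [Matrix.det_fin_two, hM.apply_one_zero_fin_two]
  ring

namespace PosDef

theorem det_div_mul_sq_le_dotProduct_mulVec (hM : M.PosDef) (x y : ℝ) :
    M.det / M 0 0 * y ^ 2 ≤ (M *ᵥ ![x, y]) ⬝ᵥ ![x, y] := by
  have h00 : 0 < M 0 0 := hM.diag_pos
  rw [dotProduct_mulVec_fin_two, hM.1.apply_one_zero_fin_two, hM.1.det_fin_two,
    div_mul_eq_mul_div, div_le_iff₀ h00]
  nlinarith [sq_nonneg (M 0 0 * x + M 0 1 * y)]

theorem continuous_integral_abs_mul_exp_dotProduct_mulVec (hM : M.PosDef) :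
    Continuous fun v₁ : ℝ =>
      ∫ v₂ : ℝ, |v₂| * exp (-(1 / 2) * ((M *ᵥ ![v₁, v₂]) ⬝ᵥ ![v₁, v₂])) := by
  have hc : 0 < M.det / M 0 0 / 2 := by
    have := hM.det_pos
    have := hM.diag_pos (i := 0)
    positivity
  refine continuous_of_dominated
    (bound := fun v₂ => |v₂| * exp (-(M.det / M 0 0 / 2) * v₂ ^ 2))
    (fun _ => by fun_prop) (fun v₁ => Eventually.of_forall fun v₂ => ?_) ?_
    (Eventually.of_forall fun v₂ => by fun_prop)
  · rw [norm_of_nonneg (by positivity)]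
    gcongr |v₂| * exp ?_
    linarith [hM.det_div_mul_sq_le_dotProduct_mulVec v₁ v₂]
  · simpa [abs_mul] using (integrable_mul_exp_neg_mul_sq hc).abs

theorem integral_abs_mul_exp_dotProduct_mulVec_zero (hM : M.PosDef) :
    ∫ v₂ : ℝ, |v₂| * exp (-(1 / 2) * ((M *ᵥ ![0, v₂]) ⬝ᵥ ![0, v₂])) = 2 / M 1 1 := by
  have h11 : 0 < M 1 1 / 2 := by have := hM.diag_pos (i := 1); positivity
  simp_rw [dotProduct_mulVec_fin_two]
  convert integral_abs_mul_exp_neg_mul_sq h11 using 3 with v₂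
  · ring_nf
  · rw [inv_div]

end PosDef

end Matrix

/-- Limit of the smoothed two-dimensional Gaussian integral. -/
theorem smoothed_gaussian_integral_limit (C : Matrix (Fin 2) (Fin 2) ℝ) (hC : C.PosDef) :
    Tendsto (fun ε : ℝ =>
        (1 / (2 * ε)) * ((2 * π)⁻¹ * (Real.sqrt C.det)⁻¹
          * ∫ v₁ in (-ε)..ε, ∫ v₂ : ℝ,
              |v₂| * Real.exp (-(1 / 2) * ((C⁻¹ *ᵥ ![v₁, v₂]) ⬝ᵥ ![v₁, v₂]))))
      (nhdsWithin 0 (Set.Ioi 0))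
      (nhds ((1 / π) * Real.sqrt (C 0 0 * C 1 1 - (C 0 1) ^ 2) / C 0 0)) := by
  have hlim := (hC.inv.continuous_integral_abs_mul_exp_dotProduct_mulVec
    |>.tendsto_symm_intervalIntegral_average).const_mul
      ((2 * π)⁻¹ * (Real.sqrt C.det)⁻¹)
  rw [hC.inv.integral_abs_mul_exp_dotProduct_mulVec_zero, inv_apply_one_one_fin_two] at hlim
  convert hlim using 2 with ε
  · ring
  · have hdet := hC.det_pos
    have h00 : 0 < C 0 0 := hC.diag_pos
    rw [← hC.1.det_fin_two]
    field_simp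
    rw [sq_sqrt hdet.le]
end
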